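/- arXiv:2603.21008 — 2 statements merged into one kernel-verified Lean document; each statement's English description precedes it below -/
import Mathlib

section
/- Let x_0, ..., x_{2n-1} be 2n pairwise distinct rational numbers. Then there exist polynomials p, q over the rationals of degree at most n such that |p(x_i)| = |q(x_i)| for all 0 ≤ i < 2n, but the functions |p| and |q| on the rationals are not equal. -/
open Polynomial

theorem stmt_0 (n : ℕ) (hn : 1 ≤ n) (x : ℕ → ℚ)
    (hx : ∀ i < 2 * n, ∀ j < 2 * n, x i = x j → i = j) :
    ∃ p q : Polynomial ℚ, p.degree ≤ n ∧ q.degree ≤ n ∧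
      (∀ i < 2 * n, |p.eval (x i)| = |q.eval (x i)|) ∧
      ∃ z : ℚ, |p.eval z| ≠ |q.eval z| := by
  set A : Polynomial ℚ := ∏ i ∈ Finset.range n, (X - C (x i)) with hA
  set B : Polynomial ℚ := ∏ i ∈ Finset.Ico n (2 * n), (X - C (x i)) with hB
  have hdA : A.degree ≤ n := by
    rw [hA, degree_prod]
    simp [degree_X_sub_C]
  have hdB : B.degree ≤ n := by
    rw [hB, degree_prod]
    simp [degree_X_sub_C]
    omega
  refine ⟨A + B, A - B, ?_, ?_, ?_, ?_⟩
  · exact le_trans (degree_add_le _ _) (max_le hdA hdB)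
  · exact le_trans (degree_sub_le _ _) (max_le hdA hdB)
  · intro i hi
    simp only [eval_add, eval_sub]
    rcases lt_or_ge i n with h | h
    · have : A.eval (x i) = 0 := by
        rw [hA, eval_prod]
        exact Finset.prod_eq_zero (Finset.mem_range.mpr h) (by simp)
      rw [this]; simp [abs_neg]
    · have : B.eval (x i) = 0 := by
        rw [hB, eval_prod]
        exact Finset.prod_eq_zero (Finset.mem_Ico.mpr ⟨h, hi⟩) (by simp)
      rw [this]; simp
  · have hAB : A * B ≠ 0 := by
      apply mul_ne_zero <;>
      · apply Monic.ne_zero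
        exact monic_prod_of_monic _ _ (fun i _ => monic_X_sub_C _)
    obtain ⟨z, hz⟩ := Infinite.exists_notMem_finset (A * B).roots.toFinset
    have hz' : (A * B).eval z ≠ 0 := by
      intro h
      exact hz (Multiset.mem_toFinset.mpr ((mem_roots hAB).mpr (IsRoot.def.mpr h)))
    rw [eval_mul] at hz'
    have ha : A.eval z ≠ 0 := fun h => hz' (by rw [h, zero_mul])
    have hb : B.eval z ≠ 0 := fun h => hz' (by rw [h, mul_zero])
    refine ⟨z, fun h => ?_⟩
    simp only [eval_add, eval_sub] at h
    rcases abs_eq_abs.mp h with h | h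
    · exact hb (by linarith)
    · exact ha (by linarith)
end

section
/- Let x_0, ..., x_n be n+1 pairwise distinct rational numbers and let p be a rational polynomial of degree at most n with values y_i = |p(x_i)|. Then there exists a rational number x_{n+1} such that for any polynomial q of degree at most n satisfying |q(x_i)| = y_i for 0 ≤ i ≤ n and |q(x_{n+1})| = |p(x_{n+1})|, one has q = p or q = −p. -/
open Polynomial

theorem stmt_7 (n : ℕ) (x : Fin (n + 1) → ℚ) (hx : Function.Injective x)
    (p : Polynomial ℚ) (hp : p.degree ≤ n) :
    ∃ z : ℚ, ∀ q : Polynomial ℚ, q.degree ≤ n →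
      (∀ i, |q.eval (x i)| = |p.eval (x i)|) →
      |q.eval z| = |p.eval z| → q = p ∨ q = -p := by
  have hxs : Set.InjOn x (Finset.univ : Finset (Fin (n+1))) := hx.injOn
  set r : (Fin (n + 1) → Bool) → Polynomial ℚ := fun b =>
    Lagrange.interpolate Finset.univ x
      (fun i => if b i then p.eval (x i) else -p.eval (x i)) with hr
  set T : Finset ℚ :=
    Finset.univ.biUnion (fun b : Fin (n+1) → Bool => ((r b)^2 - p^2).roots.toFinset) with hT
  obtain ⟨z, hz⟩ := Infinite.exists_notMem_finset T
  refine ⟨z, fun q hq hqi hqz => ?_⟩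
  have hcard : ((n : ℕ) : WithBot ℕ) < ((Finset.univ : Finset (Fin (n+1))).card : WithBot ℕ) := by
    simp; exact_mod_cast Nat.lt_succ_self n
  -- q equals r b for a suitable b
  set b : Fin (n+1) → Bool := fun i => decide (q.eval (x i) = p.eval (x i)) with hb
  have hqr : q = r b := by
    refine Lagrange.eq_interpolate_of_eval_eq _ hxs (lt_of_le_of_lt hq hcard) ?_
    intro i _
    by_cases h : q.eval (x i) = p.eval (x i)
    · simp [hb, h]
    · rcases abs_eq_abs.mp (hqi i) with h' | h'
      · exact absurd h' h
      · simp only [hb, h', decide_eq_true_eq]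
        split_ifs with hc <;> linarith
  by_cases hzero : (r b)^2 - p^2 = 0
  · have : (q - p) * (q + p) = 0 := by ring_nf; rw [hqr]; linear_combination hzero
    rcases mul_eq_zero.mp this with h | h
    · exact Or.inl (sub_eq_zero.mp h)
    · exact Or.inr (eq_neg_of_add_eq_zero_left h)
  · exfalso
    apply hz
    rw [hT]
    refine Finset.mem_biUnion.mpr ⟨b, Finset.mem_univ _, ?_⟩
    rw [Multiset.mem_toFinset, mem_roots hzero]
    have : q.eval z ^ 2 = p.eval z ^ 2 := by
      rw [← sq_abs, ← sq_abs (p.eval z), hqz]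
    simp [IsRoot, ← hqr, this]
end
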